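/- Let μ be a probability measure on (Ω, F), let X be a nonnegative adapted process whose stopped value X_σ is F_σ-measurable for every stopping time σ, and let ρ be a stopping time. If there is a finite constant x₀ such that E_μ[X_{ρ ∧ τ}] = x₀ for every stopping time τ, then the stopped process (X_{ρ ∧ t})_{t ∈ [0,∞)} is a μ-martingale with respect to (F_t): for all s ≤ t, X_{ρ ∧ t} is μ-integrable and E_μ[X_{ρ ∧ t} | F_s] = X_{ρ ∧ s} μ-a.s. -/

import Mathlib

open MeasureTheory Filter
open scoped NNReal

/-! Testing the constant-expectation hypothesis against the stopping time that equals `s` on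
`A ∈ ℱ s` and `t` off `A`, and against the constant time `t`, gives
`∫_A X_{ρ∧s} = ∫_A X_{ρ∧t}` for every `A ∈ ℱ s`: the defining property of
`E[X_{ρ∧t} | ℱ s] = X_{ρ∧s}`. Nonnegativity turns the finite lintegral `x₀` into
integrability. -/

namespace MeasureTheory

variable {Ω E : Type*} {m : MeasurableSpace Ω} {μ : Measure Ω}
  [NormedAddCommGroup E] [NormedSpace ℝ E]

theorem setIntegral_eq_of_integral_piecewise_eq {f g : Ω → E} {A : Set Ω}
    [DecidablePred (· ∈ A)] (hA : MeasurableSet A) (hf : Integrable f μ) (hg : Integrable g μ)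
    (h : ∫ ω, A.piecewise f g ω ∂μ = ∫ ω, g ω ∂μ) :
    ∫ ω in A, f ω ∂μ = ∫ ω in A, g ω ∂μ := by
  rw [integral_piecewise hA hf.integrableOn hg.integrableOn, ← integral_add_compl hA hg] at h
  exact add_right_cancel h

open scoped Classical in
theorem ae_eq_condExp_of_forall_integral_piecewise_eq [CompleteSpace E]
    {m' : MeasurableSpace Ω} (hm : m' ≤ m) [SigmaFinite (μ.trim hm)] {f g : Ω → E}
    (hf : Integrable f μ) (hg : Integrable g μ)
    (hgm : AEStronglyMeasurable[m'] g μ)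
    (h : ∀ A, MeasurableSet[m'] A → ∫ ω, A.piecewise g f ω ∂μ = ∫ ω, f ω ∂μ) :
    g =ᵐ[μ] μ[f | m'] :=
  ae_eq_condExp_of_forall_setIntegral_eq hm hf (fun _ _ _ => hg.integrableOn)
    (fun A hA _ => setIntegral_eq_of_integral_piecewise_eq (hm A hA) hg hf (h A hA)) hgm

variable {ι : Type*}

theorem IsStoppingTime.coe_min [LinearOrder ι] {ℱ : Filtration ι m} {ρ σ : Ω → ι}
    (hρ : IsStoppingTime ℱ fun ω => (ρ ω : WithTop ι))
    (hσ : IsStoppingTime ℱ fun ω => (σ ω : WithTop ι)) :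
    IsStoppingTime ℱ fun ω => ((min (ρ ω) (σ ω) : ι) : WithTop ι) := by
  simpa only [WithTop.coe_min] using hρ.min hσ

theorem isStoppingTime_coe_piecewise_const [Preorder ι] {ℱ : Filtration ι m} {s t : ι}
    (hst : s ≤ t) {A : Set Ω}
    [DecidablePred (· ∈ A)] (hA : MeasurableSet[ℱ s] A) :
    IsStoppingTime ℱ fun ω => (A.piecewise (fun _ => s) (fun _ => t) ω : WithTop ι) := by
  convert isStoppingTime_piecewise_const hst hA using 1
  ext ω
  by_cases hω : ω ∈ A <;> simp [hω]

end MeasureTheory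

theorem stopped_process_martingale_of_constant_sampled_expectation_general
    {Ω : Type*} {m : MeasurableSpace Ω} (μ : Measure Ω) [IsProbabilityMeasure μ]
    (ℱ : Filtration ℝ≥0 m)
    (X : ℝ≥0 → Ω → ℝ)
    (hXnonneg : ∀ t ω, 0 ≤ X t ω)
    (hXstopmeas : ∀ (σ : Ω → ℝ≥0) (hσ : IsStoppingTime ℱ (fun ω => (σ ω : WithTop ℝ≥0))),
      Measurable[hσ.measurableSpace] fun ω => X (σ ω) ω)
    (ρ : Ω → ℝ≥0) (hρ : IsStoppingTime ℱ (fun ω => (ρ ω : WithTop ℝ≥0)))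
    (x₀ : ℝ)
    (hconst : ∀ σ : Ω → ℝ≥0, IsStoppingTime ℱ (fun ω => (σ ω : WithTop ℝ≥0)) →
      ∫⁻ ω, ENNReal.ofReal (X (min (ρ ω) (σ ω)) ω) ∂μ = ENNReal.ofReal x₀) :
    ∀ s t : ℝ≥0, s ≤ t →
      Integrable (fun ω => X (min (ρ ω) t) ω) μ ∧
        μ[(fun ω => X (min (ρ ω) t) ω) | ℱ s] =ᵐ[μ] fun ω => X (min (ρ ω) s) ω := by
  classical
  intro s t hst
  have hmeas (σ : Ω → ℝ≥0) (hσ : IsStoppingTime ℱ fun ω => (σ ω : WithTop ℝ≥0)) :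
      AEStronglyMeasurable (fun ω => X (min (ρ ω) (σ ω)) ω) μ :=
    ((hXstopmeas _ (hρ.coe_min hσ)).mono (hρ.coe_min hσ).measurableSpace_le
      le_rfl).aestronglyMeasurable
  have hnonneg (σ : Ω → ℝ≥0) : 0 ≤ᵐ[μ] fun ω => X (min (ρ ω) (σ ω)) ω :=
    .of_forall fun ω => hXnonneg _ ω
  have hint (σ : Ω → ℝ≥0) (hσ : IsStoppingTime ℱ fun ω => (σ ω : WithTop ℝ≥0)) :
      Integrable (fun ω => X (min (ρ ω) (σ ω)) ω) μ :=
    (lintegral_ofReal_ne_top_iff_integrable (hmeas σ hσ) (hnonneg σ)).1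
      (hconst σ hσ ▸ ENNReal.ofReal_ne_top)
  have hexp (σ : Ω → ℝ≥0) (hσ : IsStoppingTime ℱ fun ω => (σ ω : WithTop ℝ≥0)) :
      ∫ ω, X (min (ρ ω) (σ ω)) ω ∂μ = ∫ ω, X (min (ρ ω) t) ω ∂μ := by
    rw [integral_eq_lintegral_of_nonneg_ae (hnonneg σ) (hmeas σ hσ), hconst σ hσ,
      integral_eq_lintegral_of_nonneg_ae (hnonneg _) (hmeas _ (isStoppingTime_const ℱ t)),
      hconst _ (isStoppingTime_const ℱ t)]
  have hρs : IsStoppingTime ℱ fun ω => ((min (ρ ω) s : ℝ≥0) : WithTop ℝ≥0) :=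
    hρ.coe_min (isStoppingTime_const ℱ s)
  refine ⟨hint _ (isStoppingTime_const ℱ t),
    (ae_eq_condExp_of_forall_integral_piecewise_eq (ℱ.le s) (hint _ (isStoppingTime_const ℱ t))
      (hint _ (isStoppingTime_const ℱ s)) ?_ fun A hA => ?_).symm⟩
  · exact ((hXstopmeas _ hρs).mono (hρs.measurableSpace_le_of_le_const fun ω =>
      WithTop.coe_le_coe.2 (min_le_right _ _)) le_rfl).aestronglyMeasurable
  · convert hexp _ (isStoppingTime_coe_piecewise_const hst hA) using 3 with ω
    by_cases hω : ω ∈ A <;> simp [hω]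

/-- If `X` is a nonnegative adapted process whose stopped values are measurable
for the stopped σ-algebras, `ρ` is a stopping time, and the expectation under the probability
measure `μ` of `X_{ρ ∧ τ}` equals the finite constant `x₀` for every stopping time `τ`, then
the stopped process `(X_{ρ ∧ t})_t` is a `μ`-martingale with respect to `ℱ`: for `s ≤ t`,
`X_{ρ ∧ t}` is `μ`-integrable and `E_μ [X_{ρ ∧ t} | F_s] = X_{ρ ∧ s}` `μ`-a.s. -/
theorem stopped_process_martingale_of_constant_sampled_expectation
    {Ω : Type*} {m : MeasurableSpace Ω} (μ : Measure Ω) [IsProbabilityMeasure μ]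
    (ℱ : Filtration ℝ≥0 m)
    (X : ℝ≥0 → Ω → ℝ)
    (hXnonneg : ∀ t ω, 0 ≤ X t ω)
    (hXadapted : Adapted ℱ X)
    (hXstopmeas : ∀ (σ : Ω → ℝ≥0) (hσ : IsStoppingTime ℱ (fun ω => (σ ω : WithTop ℝ≥0))),
      Measurable[hσ.measurableSpace] fun ω => X (σ ω) ω)
    (ρ : Ω → ℝ≥0) (hρ : IsStoppingTime ℱ (fun ω => (ρ ω : WithTop ℝ≥0)))
    (x₀ : ℝ)
    (hconst : ∀ σ : Ω → ℝ≥0, IsStoppingTime ℱ (fun ω => (σ ω : WithTop ℝ≥0)) →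
      ∫⁻ ω, ENNReal.ofReal (X (min (ρ ω) (σ ω)) ω) ∂μ = ENNReal.ofReal x₀) :
    ∀ s t : ℝ≥0, s ≤ t →
      Integrable (fun ω => X (min (ρ ω) t) ω) μ ∧
        μ[(fun ω => X (min (ρ ω) t) ω) | ℱ s] =ᵐ[μ] fun ω => X (min (ρ ω) s) ω :=
  stopped_process_martingale_of_constant_sampled_expectation_general μ ℱ X hXnonneg hXstopmeas ρ hρ
    x₀ hconst
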